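/- Let $\sigma > 0$, $r \ge 0$, $\alpha > 0$, $T > 0$ and $\beta \ge \sigma^2/2 + r + 1$. Define $\bar u(t,s,a) = \frac{\alpha}{t}\left(1 + e^{-\beta t}\sqrt{s^2+a^2}\right)$. Then for all $t \in (0,T)$ and $s, a > 0$, $$\frac{\sigma^2 s^2}{2}\, \partial_{ss}\bar u + r s\, \partial_s \bar u + s\, \partial_a \bar u + \partial_t \bar u - r \bar u \le 0,$$ i.e. $L \bar u \le 0$ on $(0,T) \times \mathbb{R}^2_+$. -/

import Mathlib

/-- The candidate super-solution
`ū(t,s,a) = (α/t) (1 + e^{-β t} √(s² + a²))`. -/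
noncomputable def ubar (α β : ℝ) (t s a : ℝ) : ℝ :=
  α / t * (1 + Real.exp (-β * t) * Real.sqrt (s ^ 2 + a ^ 2))

/-!
With `ρ = √(s² + a²)` and `K = α e^{-βt} / t`, the derivatives of `ū` are `∂ₛū = K s/ρ`,
`∂ₛₛū = K a²/ρ³`, `∂ₐū = K a/ρ` and `∂ₜū = -ū/t - βKρ`. The inequalities `s²a² ≤ ρ⁴`, `s² ≤ ρ²`
and `s a ≤ ρ²` bound the diffusion and drift terms by `(σ²/2 + r + 1) K ρ ≤ βKρ`, which the
`-βKρ` part of `∂ₜū` absorbs; what is left is `-(1/t + r) ū ≤ 0`.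
-/

open Real

lemma hasDerivAt_sqrt_sq_add (c x : ℝ) (h : 0 < x ^ 2 + c) :
    HasDerivAt (fun z => √(z ^ 2 + c)) (x / √(x ^ 2 + c)) x := by
  have hsq : HasDerivAt (fun z : ℝ => z ^ 2 + c) (2 * x) x := by
    simpa using (hasDerivAt_pow 2 x).add_const c
  have hρ : √(x ^ 2 + c) ≠ 0 := (sqrt_pos.mpr h).ne'
  exact ((hasDerivAt_sqrt h.ne').comp x hsq).congr_deriv (by field_simp)

lemma hasDerivAt_div_sqrt_sq_add {c : ℝ} (hc : 0 < c) (x : ℝ) :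
    HasDerivAt (fun z => z / √(z ^ 2 + c)) (c / √(x ^ 2 + c) ^ 3) x := by
  have hpos : 0 < x ^ 2 + c := by positivity
  have hρ : 0 < √(x ^ 2 + c) := sqrt_pos.mpr hpos
  have hρsq : √(x ^ 2 + c) ^ 2 = x ^ 2 + c := sq_sqrt hpos.le
  refine ((hasDerivAt_id' x).div (hasDerivAt_sqrt_sq_add c x hpos) hρ.ne').congr_deriv ?_
  field_simp
  linear_combination hρsq

section Derivatives

variable (α β : ℝ)

lemma deriv_ubar_s {a : ℝ} (ha : a ≠ 0) (t : ℝ) :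
    deriv (fun z => ubar α β t z a)
      = fun z => α / t * exp (-β * t) * (z / √(z ^ 2 + a ^ 2)) := by
  funext z
  have hderiv := (((hasDerivAt_sqrt_sq_add (a ^ 2) z (by positivity)).const_mul
    (exp (-β * t))).const_add 1).const_mul (α / t)
  unfold ubar
  rw [hderiv.deriv]
  ring

lemma deriv_deriv_ubar_s {a : ℝ} (ha : a ≠ 0) (t s : ℝ) :
    deriv (fun y => deriv (fun z => ubar α β t z a) y) s
      = α / t * exp (-β * t) * (a ^ 2 / √(s ^ 2 + a ^ 2) ^ 3) := by
  rw [deriv_ubar_s α β ha t]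
  exact ((hasDerivAt_div_sqrt_sq_add (by positivity) s).const_mul _).deriv

lemma deriv_ubar_a {s : ℝ} (hs : s ≠ 0) (t a : ℝ) :
    deriv (fun w => ubar α β t s w) a
      = α / t * exp (-β * t) * (a / √(s ^ 2 + a ^ 2)) := by
  have hderiv := (((hasDerivAt_sqrt_sq_add (s ^ 2) a (by positivity)).const_mul
    (exp (-β * t))).const_add 1).const_mul (α / t)
  simp only [ubar, add_comm (s ^ 2)]
  rw [hderiv.deriv]
  ring

lemma deriv_ubar_t {t : ℝ} (ht : t ≠ 0) (s a : ℝ) :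
    deriv (fun τ => ubar α β τ s a) t
      = -ubar α β t s a / t - β * (α / t * exp (-β * t) * √(s ^ 2 + a ^ 2)) := by
  have hinv : HasDerivAt (fun τ : ℝ => α / τ) (α * -(t ^ 2)⁻¹) t := by
    simpa [div_eq_mul_inv] using (hasDerivAt_inv ht).const_mul α
  have hexp : HasDerivAt (fun τ : ℝ => exp (-β * τ)) (exp (-β * t) * -β) t := by
    simpa using ((hasDerivAt_id t).const_mul (-β)).exp
  have hderiv : HasDerivAt (fun τ => ubar α β τ s a) _ t :=
    hinv.mul ((hexp.mul_const √(s ^ 2 + a ^ 2)).const_add 1)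
  rw [hderiv.deriv, ubar]
  field_simp
  ring

end Derivatives

lemma ubar_nonneg {α : ℝ} (hα : 0 ≤ α) (β : ℝ) {t : ℝ} (ht : 0 ≤ t) (s a : ℝ) :
    0 ≤ ubar α β t s a := by
  unfold ubar
  positivity

lemma asian_spatial_terms_le {σ r : ℝ} (hr : 0 ≤ r) {s a : ℝ}
    (hpos : 0 < s ^ 2 + a ^ 2) :
    σ ^ 2 * s ^ 2 / 2 * (a ^ 2 / √(s ^ 2 + a ^ 2) ^ 3) + r * s * (s / √(s ^ 2 + a ^ 2))
        + s * (a / √(s ^ 2 + a ^ 2))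
      ≤ (σ ^ 2 / 2 + r + 1) * √(s ^ 2 + a ^ 2) := by
  set ρ := √(s ^ 2 + a ^ 2)
  have hρ : 0 < ρ := sqrt_pos.mpr hpos
  have hρsq : ρ ^ 2 = s ^ 2 + a ^ 2 := sq_sqrt hpos.le
  have hs2 : s ^ 2 ≤ ρ ^ 2 := by nlinarith
  have hsa : s * a ≤ ρ ^ 2 := by nlinarith [sq_nonneg (s - a)]
  have hsa2 : s ^ 2 * a ^ 2 ≤ ρ ^ 2 * ρ ^ 2 := by
    nlinarith [mul_nonneg (sq_nonneg s) (sq_nonneg a)]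
  rw [← sub_nonneg]
  have key : (σ ^ 2 / 2 + r + 1) * ρ - (σ ^ 2 * s ^ 2 / 2 * (a ^ 2 / ρ ^ 3)
      + r * s * (s / ρ) + s * (a / ρ))
      = (σ ^ 2 / 2 * (ρ ^ 2 * ρ ^ 2 - s ^ 2 * a ^ 2) + r * ρ ^ 2 * (ρ ^ 2 - s ^ 2)
          + ρ ^ 2 * (ρ ^ 2 - s * a)) / ρ ^ 3 := by
    field_simp
    ring
  rw [key]
  apply div_nonneg _ (by positivity)
  have := sub_nonneg.mpr hs2
  have := sub_nonneg.mpr hsa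
  have := sub_nonneg.mpr hsa2
  positivity

theorem ubar_supersolution_general (σ r α T β : ℝ)
    (hr : 0 ≤ r) (hα : 0 < α)
    (hβ : σ ^ 2 / 2 + r + 1 ≤ β) :
    ∀ t ∈ Set.Ioo (0 : ℝ) T, ∀ s a : ℝ, 0 < s → 0 < a →
      σ ^ 2 * s ^ 2 / 2 *
          deriv (fun y => deriv (fun z => ubar α β t z a) y) s
        + r * s * deriv (fun z => ubar α β t z a) s
        + s * deriv (fun w => ubar α β t s w) a
        + deriv (fun τ => ubar α β τ s a) t
        - r * ubar α β t s a ≤ 0 := by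
  rintro t ⟨ht, -⟩ s a hs ha
  rw [deriv_deriv_ubar_s α β ha.ne', deriv_ubar_s α β ha.ne', deriv_ubar_a α β hs.ne',
    deriv_ubar_t α β ht.ne']
  set K := α / t * exp (-β * t)
  set ρ := √(s ^ 2 + a ^ 2)
  have hK : 0 ≤ K := by positivity
  have hρ : 0 ≤ ρ := sqrt_nonneg _
  have hu := ubar_nonneg hα.le β ht.le s a
  have hspatial := asian_spatial_terms_le (σ := σ) hr (by positivity : 0 < s ^ 2 + a ^ 2)
  have hdrift : K * ((σ ^ 2 / 2 + r + 1) * ρ) ≤ K * (β * ρ) := by gcongr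
  have hdecay : 0 ≤ ubar α β t s a / t + r * ubar α β t s a := by positivity
  calc σ ^ 2 * s ^ 2 / 2 * (K * (a ^ 2 / ρ ^ 3)) + r * s * (K * (s / ρ)) + s * (K * (a / ρ))
        + (-ubar α β t s a / t - β * (K * ρ)) - r * ubar α β t s a
      = K * (σ ^ 2 * s ^ 2 / 2 * (a ^ 2 / ρ ^ 3) + r * s * (s / ρ) + s * (a / ρ))
          - K * (β * ρ) - (ubar α β t s a / t + r * ubar α β t s a) := by ring
    _ ≤ 0 := by linarith [mul_le_mul_of_nonneg_left hspatial hK]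

/-- For `σ > 0`, `r ≥ 0`, `α > 0`, `T > 0` and `β ≥ σ²/2 + r + 1`, the function
`ū(t,s,a) = (α/t)(1 + e^{-β t}√(s²+a²))` satisfies `L ū ≤ 0` on `(0,T) × ℝ²₊`,
where `L u = (σ² s²/2) ∂_{ss} u + r s ∂_s u + s ∂_a u + ∂_t u - r u` is the
arithmetic Asian pricing operator. -/
theorem ubar_supersolution (σ r α T β : ℝ)
    (hσ : 0 < σ) (hr : 0 ≤ r) (hα : 0 < α) (hT : 0 < T)
    (hβ : σ ^ 2 / 2 + r + 1 ≤ β) :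
    ∀ t ∈ Set.Ioo (0 : ℝ) T, ∀ s a : ℝ, 0 < s → 0 < a →
      σ ^ 2 * s ^ 2 / 2 *
          deriv (fun y => deriv (fun z => ubar α β t z a) y) s
        + r * s * deriv (fun z => ubar α β t z a) s
        + s * deriv (fun w => ubar α β t s w) a
        + deriv (fun τ => ubar α β τ s a) t
        - r * ubar α β t s a ≤ 0 :=
  ubar_supersolution_general σ r α T β hr hα hβ
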